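/- Let α = (9−√5)/38. For every real number μ with 0 ≤ μ ≤ 1: if the 9×9 real symmetric matrix N(μ) is positive semidefinite, then μ ≤ 5√5 − 11. -/

import Mathlib

noncomputable def α : ℝ := (9 - Real.sqrt 5) / 38

noncomputable def N (μ : ℝ) : Matrix (Fin 9) (Fin 9) ℝ :=
  !![1, μ/2+α*(1-μ), μ/2+2*α*(1-μ), μ/2+α*(1-μ), μ/2+2*α*(1-μ), μ/2, μ/2+α*(1-μ), μ/2+α*(1-μ), 0;
     μ/2+α*(1-μ), μ/2+α*(1-μ), 0, μ/2, μ/2+α*(1-μ), μ/2, μ/2+α*(1-μ), μ/2, 0;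
     μ/2+2*α*(1-μ), 0, μ/2+2*α*(1-μ), μ/2+α*(1-μ), 0, μ/2, 0, μ/2+α*(1-μ), 0;
     μ/2+α*(1-μ), μ/2, μ/2+α*(1-μ), μ/2+α*(1-μ), 0, μ/2, μ/2, μ/2+α*(1-μ), 0;
     μ/2+2*α*(1-μ), μ/2+α*(1-μ), 0, 0, μ/2+2*α*(1-μ), μ/2, μ/2+α*(1-μ), 0, 0;
     μ/2, μ/2, μ/2, μ/2, μ/2, μ/2, μ/2, μ/2, 0;
     μ/2+α*(1-μ), μ/2+α*(1-μ), 0, μ/2, μ/2+α*(1-μ), μ/2, μ/2+α*(1-μ), μ/2, 0;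
     μ/2+α*(1-μ), μ/2, μ/2+α*(1-μ), μ/2+α*(1-μ), 0, μ/2, μ/2, μ/2+α*(1-μ), 0;
     0, 0, 0, 0, 0, 0, 0, 0, 0]

/-!
Testing positive semidefiniteness of `N μ` against `v = (0, -p, -2, p, 2, 0, 0, 0, 0)` gives
`2 μ (p - 1) ≤ α (1 - μ) (p² - 4p + 8)`. The choice `p = 1 + √5` maximises `(p - 1) / (p² - 4p + 8)`,
and for the given `α` the resulting bound on `μ` is `(25 - 7√5) / (25 + 12√5) = 5√5 - 11`.
-/

open Matrix

def testVec (p : ℝ) : Fin 9 → ℝ := ![0, -p, -2, p, 2, 0, 0, 0, 0]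

lemma testVec_dotProduct_N_mulVec (μ p : ℝ) :
    testVec p ⬝ᵥ N μ *ᵥ testVec p =
      2 * (α * (1 - μ) * (p ^ 2 - 4 * p + 8) - 2 * μ * (p - 1)) := by
  simp only [testVec, N, dotProduct, mulVec, Fin.sum_univ_succ, Fin.sum_univ_zero, of_apply,
    cons_val', cons_val_zero, cons_val_succ, cons_val_fin_one]
  ring

lemma two_mul_mul_sub_one_le_of_posSemidef_N {μ : ℝ} (h : (N μ).PosSemidef) (p : ℝ) :
    2 * μ * (p - 1) ≤ α * (1 - μ) * (p ^ 2 - 4 * p + 8) := by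
  have := h.dotProduct_mulVec_nonneg (testVec p)
  rw [star_trivial, testVec_dotProduct_N_mulVec] at this
  linarith

theorem stmt11_general (μ : ℝ)
    (h : (N μ).PosSemidef) : μ ≤ 5 * Real.sqrt 5 - 11 := by
  have hs : Real.sqrt 5 ^ 2 = 5 := Real.sq_sqrt (by norm_num)
  have key := two_mul_mul_sub_one_le_of_posSemidef_N h (1 + Real.sqrt 5)
  simp only [α] at key
  have hμ : (25 + 12 * Real.sqrt 5) * μ ≤ 25 - 7 * Real.sqrt 5 := by
    linear_combination (19 / 2) * key + (1 - μ) * (11 - Real.sqrt 5) / 4 * hs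
  have hbound : (25 + 12 * Real.sqrt 5) * (5 * Real.sqrt 5 - 11) = 25 - 7 * Real.sqrt 5 := by
    linear_combination 60 * hs
  exact le_of_mul_le_mul_left (hμ.trans_eq hbound.symm) (by positivity)

theorem stmt11 (μ : ℝ) (hμ0 : 0 ≤ μ) (hμ1 : μ ≤ 1)
    (h : (N μ).PosSemidef) : μ ≤ 5 * Real.sqrt 5 - 11 :=
  stmt11_general μ h
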